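/- Let Q_n be the hypercube graph of dimension n with n ≥ 3. Then the distance-3 chromatic number satisfies χ_3(Q_n) ≥ 2n if n is even, and χ_3(Q_n) ≥ 2(n + 1) if n is odd. -/

import Mathlib

open Finset Polynomial

/-- The `t`-th power graph: vertices are adjacent when they are distinct and at
graph (geodesic) distance at most `t` in `G`. -/
def powerGraph {V : Type*} (G : SimpleGraph V) (t : ℕ) : SimpleGraph V where
  Adj u v := u ≠ v ∧ G.Reachable u v ∧ G.dist u v ≤ t
  symm := by
    constructor
    rintro u v ⟨h1, h2, h3⟩
    exact ⟨h1.symm, h2.symm, by rwa [SimpleGraph.dist_comm]⟩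
  loopless := ⟨fun v h => h.1 rfl⟩

/-- The distance-`t` chromatic number of a graph. -/
noncomputable def distChromaticNumber {V : Type*} (G : SimpleGraph V) (t : ℕ) : ℕ∞ :=
  (powerGraph G t).chromaticNumber

/-- `x` is an eigenvalue of the (real) adjacency matrix of `G`. -/
def IsAdjEigenvalue {V : Type*} [Fintype V] [DecidableEq V] (G : SimpleGraph V)
    [DecidableRel G.Adj] (x : ℝ) : Prop :=
  ∃ v : V → ℝ, v ≠ 0 ∧ (SimpleGraph.adjMatrix ℝ G).mulVec v = x • v

/-- The hypercube graph `Q_n`. -/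
def hypercube (n : ℕ) : SimpleGraph (Fin n → Fin 2) where
  Adj u v := hammingDist u v = 1
  symm := ⟨fun u v (h : hammingDist u v = 1) => show hammingDist v u = 1 by rwa [hammingDist_comm]⟩
  loopless := ⟨fun u (h : hammingDist u u = 1) => by rw [hammingDist_self] at h; exact absurd h (by norm_num)⟩

noncomputable instance (n : ℕ) : DecidableRel (hypercube n).Adj :=
  fun _ _ => Classical.dec _

/-- The Lee graph `G(n,q)`: the `n`-fold Cartesian product of the `q`-cycle. -/
def leeGraph (n q : ℕ) : SimpleGraph (Fin n → ZMod q) where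
  Adj u v := u ≠ v ∧ ∃ i, (u i = v i + 1 ∨ v i = u i + 1) ∧ ∀ j, j ≠ i → u j = v j
  symm := by
    constructor
    rintro u v ⟨hne, i, h, hj⟩
    exact ⟨hne.symm, i, h.symm, fun j hji => (hj j hji).symm⟩
  loopless := ⟨fun u h => h.1 rfl⟩

noncomputable instance (n q : ℕ) : DecidableRel (leeGraph n q).Adj :=
  fun _ _ => Classical.dec _

/-- The Lee distance on `(ℤ/qℤ)^n`. -/
def leeDist {n q : ℕ} (b c : Fin n → ZMod q) : ℕ :=
  ∑ i, min ((b i - c i).val) (q - (b i - c i).val)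

lemma fin2_eq {a b c : Fin 2} (h1 : a ≠ c) (h2 : b ≠ c) : a = b := by omega

def dset {m : ℕ} (x y : Fin m → Fin 2) : Finset (Fin m) := {i | x i ≠ y i}

lemma mem_dset {m : ℕ} {x y : Fin m → Fin 2} {i : Fin m} : i ∈ dset x y ↔ x i ≠ y i := by
  simp [dset]

lemma hd_eq {m : ℕ} (x y : Fin m → Fin 2) : hammingDist x y = (dset x y).card := rfl

lemma dset_comm {m : ℕ} (x y : Fin m → Fin 2) : dset x y = dset y x := by
  ext i; simp [mem_dset, ne_comm]

lemma key_ineq {m : ℕ} (x a b : Fin m → Fin 2) :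
    hammingDist a b + 2 * ((dset x a) ∩ (dset x b)).card
      ≤ hammingDist x a + hammingDist x b := by
  have hsub : dset a b ⊆ ((dset x a) ∪ (dset x b)) \ ((dset x a) ∩ (dset x b)) := by
    intro i hi
    rw [mem_dset] at hi
    simp only [mem_sdiff, mem_union, mem_inter, mem_dset]
    constructor
    · by_contra h
      push_neg at h
      exact hi (by rw [← h.1, ← h.2])
    · rintro ⟨h1, h2⟩
      exact hi (fin2_eq (fun hh => h1 hh.symm) (fun hh => h2 hh.symm))
  have h1 := Finset.card_le_card hsub
  rw [Finset.card_sdiff_of_subset (Finset.inter_subset_union)] at h1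
  have h2 : ((dset x a) ∪ (dset x b)).card + ((dset x a) ∩ (dset x b)).card
      = (dset x a).card + (dset x b).card := Finset.card_union_add_card_inter _ _
  have h3 : (dset x a ∩ dset x b).card ≤ (dset x a ∪ dset x b).card :=
    Finset.card_le_card Finset.inter_subset_union
  rw [hd_eq a b, hd_eq x a, hd_eq x b]
  omega

def sw : Fin 2 → Fin 2 := fun a => if a = 0 then 1 else 0

lemma sw_ne (a : Fin 2) : sw a ≠ a := by fin_cases a <;> decide

def flipS {m : ℕ} (c : Fin m → Fin 2) (s : Finset (Fin m)) : Fin m → Fin 2 :=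
  fun i => if i ∈ s then sw (c i) else c i

lemma dset_flipS {m : ℕ} (c : Fin m → Fin 2) (s : Finset (Fin m)) :
    dset (flipS c s) c = s := by
  ext i
  by_cases h : i ∈ s <;> simp [mem_dset, flipS, h, sw_ne]

lemma hd_flipS {m : ℕ} (c : Fin m → Fin 2) (s : Finset (Fin m)) :
    hammingDist (flipS c s) c = s.card := by
  rw [hd_eq, dset_flipS]

lemma eq_flipS {m : ℕ} (x c : Fin m → Fin 2) : x = flipS c (dset x c) := by
  funext i
  by_cases h : x i = c i
  · simp [flipS, mem_dset, h]
  · simp only [flipS, mem_dset, h, ne_eq, not_false_eq_true, if_true]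
    exact fin2_eq h (sw_ne _)

lemma flipS_injOn {m : ℕ} (c : Fin m → Fin 2) {s t : Finset (Fin m)}
    (h : flipS c s = flipS c t) : s = t := by
  rw [← dset_flipS c s, ← dset_flipS c t, h]

-- walk construction
lemma hcube_walk (n : ℕ) : ∀ (k : ℕ) (x y : Fin n → Fin 2), hammingDist x y = k →
    ∃ p : (hypercube n).Walk x y, p.length = k := by
  intro k
  induction k with
  | zero =>
    intro x y h
    obtain rfl := eq_of_hammingDist_eq_zero h
    exact ⟨SimpleGraph.Walk.nil, rfl⟩
  | succ k ih =>
    intro x y h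
    have hne : (dset x y).Nonempty := by
      rw [← Finset.card_pos, ← hd_eq, h]; omega
    obtain ⟨i, hi⟩ := hne
    rw [mem_dset] at hi
    set x' := Function.update x i (y i) with hx'
    have hadj : (hypercube n).Adj x x' := by
      show hammingDist x x' = 1
      rw [hd_eq]
      have : dset x x' = {i} := by
        ext j
        simp only [mem_dset, Finset.mem_singleton, hx']
        by_cases hj : j = i
        · subst hj; simp [Function.update_self, hi]
        · simp [Function.update_of_ne hj, hj]
      rw [this, Finset.card_singleton]
    have hd' : hammingDist x' y = k := by
      rw [hd_eq]
      have : dset x' y = (dset x y).erase i := by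
        ext j
        simp only [mem_dset, Finset.mem_erase, hx']
        by_cases hj : j = i
        · subst hj; simp [Function.update_self]
        · simp [Function.update_of_ne hj, hj]
      rw [this, Finset.card_erase_of_mem (mem_dset.mpr hi), ← hd_eq, h]; omega
    obtain ⟨p, hp⟩ := ih x' y hd'
    exact ⟨SimpleGraph.Walk.cons hadj p, by simp [hp]⟩

lemma hcube_reach {n : ℕ} (x y : Fin n → Fin 2) : (hypercube n).Reachable x y := by
  obtain ⟨p, _⟩ := hcube_walk n (hammingDist x y) x y rfl
  exact ⟨p⟩

lemma hcube_dist_le {n : ℕ} (x y : Fin n → Fin 2) :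
    (hypercube n).dist x y ≤ hammingDist x y := by
  obtain ⟨p, hp⟩ := hcube_walk n (hammingDist x y) x y rfl
  exact hp ▸ SimpleGraph.dist_le p
-- ball pieces
section packing
variable {m : ℕ}

def bset (c : Fin m → Fin 2) : Finset (Fin m → Fin 2) :=
  insert c (Finset.univ.image (fun i => flipS c {i}))

lemma mem_bset_dist {c x : Fin m → Fin 2} (hx : x ∈ bset c) : hammingDist x c ≤ 1 := by
  rw [bset, Finset.mem_insert] at hx
  rcases hx with rfl | hx
  · simp [hammingDist_self]
  · obtain ⟨i, _, rfl⟩ := Finset.mem_image.mp hx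
    rw [hd_flipS]; simp

lemma card_bset (c : Fin m → Fin 2) : (bset c).card = m + 1 := by
  rw [bset, Finset.card_insert_of_notMem, Finset.card_image_of_injective, Finset.card_univ,
    Fintype.card_fin]
  · intro i j hij
    have := flipS_injOn c hij
    simpa using this
  · intro hc
    obtain ⟨i, _, hi⟩ := Finset.mem_image.mp hc
    have : hammingDist (flipS c {i}) c = 1 := by rw [hd_flipS]; simp
    rw [hi, hammingDist_self] at this
    omega

variable {S : Finset (Fin m → Fin 2)}
  (hS : ∀ c ∈ S, ∀ c' ∈ S, c ≠ c' → 3 ≤ hammingDist c c')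

include hS in
lemma ball_union_card :
    (S.biUnion bset).card = S.card * (m + 1) := by
  rw [Finset.card_biUnion, Finset.sum_congr rfl (fun c _ => card_bset c), Finset.sum_const,
    smul_eq_mul]
  intro c hc c' hc' hne
  rw [Function.onFun, Finset.disjoint_left]
  intro z hz hz'
  have h1 := mem_bset_dist hz
  have h2 := mem_bset_dist hz'
  have h3 := hammingDist_triangle c z c'
  rw [hammingDist_comm c z] at h3
  have := hS c hc c' hc' hne
  omega

include hS in
lemma code_ball : S.card * (m + 1) ≤ 2 ^ m := by
  calc S.card * (m + 1) = (S.biUnion bset).card := (ball_union_card hS).symm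
    _ ≤ (Finset.univ : Finset (Fin m → Fin 2)).card := Finset.card_le_card (Finset.subset_univ _)
    _ = 2 ^ m := by simp [Finset.card_univ]

end packing
section refined
open Finset
variable {m : ℕ}

lemma double_count {α β : Type*} [DecidableEq α] [DecidableEq β]
    (A : Finset α) (B : Finset β) (R : α → β → Prop) [∀ a b, Decidable (R a b)] :
    ∑ a ∈ A, (B.filter (R a)).card = ∑ b ∈ B, (A.filter (fun a => R a b)).card := by
  simp_rw [Finset.card_filter]
  exact Finset.sum_comm

lemma choose2 (m : ℕ) : 2 * Nat.choose m 2 = m * (m - 1) := by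
  induction m with
  | zero => rfl
  | succ r ih =>
    rw [Nat.choose_succ_succ, Nat.choose_one_right]
    have : r + 1 - 1 = r := rfl
    rw [this]
    cases r with
    | zero => rfl
    | succ s =>
      have : s + 1 - 1 = s := rfl
      rw [this] at ih
      ring_nf
      ring_nf at ih
      omega

lemma mult_bound {S : Finset (Fin m → Fin 2)}
    (hS : ∀ c ∈ S, ∀ c' ∈ S, c ≠ c' → 3 ≤ hammingDist c c') (x : Fin m → Fin 2) :
    2 * (S.filter (fun c => hammingDist x c = 2)).card ≤ m := by
  set F := S.filter (fun c => hammingDist x c = 2) with hF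
  have hdisj : ∀ c ∈ F, ∀ c' ∈ F, c ≠ c' → Disjoint (dset x c) (dset x c') := by
    intro c hc c' hc' hne
    rw [hF, Finset.mem_filter] at hc hc'
    have hk := key_ineq x c c'
    have h3 := hS c hc.1 c' hc'.1 hne
    rw [hc.2, hc'.2] at hk
    rw [Finset.disjoint_iff_inter_eq_empty, ← Finset.card_eq_zero]
    omega
  have hcard : (F.biUnion (fun c => dset x c)).card = 2 * F.card := by
    rw [Finset.card_biUnion hdisj]
    rw [Finset.sum_congr rfl (fun c hc => ?_), Finset.sum_const, smul_eq_mul, Nat.mul_comm]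
    rw [hF, Finset.mem_filter] at hc
    rw [← hd_eq, hc.2]
  calc 2 * F.card = (F.biUnion (fun c => dset x c)).card := hcard.symm
    _ ≤ (Finset.univ : Finset (Fin m)).card := Finset.card_le_card (Finset.subset_univ _)
    _ = m := by simp
end refined
section refined2
open Finset
variable {m : ℕ} {S : Finset (Fin m → Fin 2)}

lemma dset_eq_filter (x y : Fin m → Fin 2) :
    dset x y = Finset.univ.filter (fun i => x i ≠ y i) := rfl

lemma tset_bound (hme : Even m)
    (hS : ∀ c ∈ S, ∀ c' ∈ S, c ≠ c' → 3 ≤ hammingDist c c')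
    {c : Fin m → Fin 2} (hc : c ∈ S) :
    6 * (S.filter (fun c' => hammingDist c c' = 3)).card ≤ m * (m - 2) := by
  set T := S.filter (fun c' => hammingDist c c' = 3) with hT
  have hmemT : ∀ c' ∈ T, c' ∈ S ∧ (dset c c').card = 3 := by
    intro c' hc'
    rw [hT, Finset.mem_filter] at hc'
    exact ⟨hc'.1, by rw [← hd_eq, hc'.2]⟩
  have hcT : c ∉ T := by
    intro h
    have := (hmemT c h).2
    rw [← hd_eq, hammingDist_self] at this; omega
  -- per point bound
  have step3 : ∀ p : Fin m, 2 * (T.filter (fun c' => c p ≠ c' p)).card ≤ m - 2 := by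
    intro p
    set Tp := T.filter (fun c' => c p ≠ c' p) with hTp
    have hmemTp : ∀ c' ∈ Tp, c' ∈ S ∧ (dset c c').card = 3 ∧ p ∈ dset c c' := by
      intro c' h
      rw [hTp, Finset.mem_filter] at h
      exact ⟨(hmemT c' h.1).1, (hmemT c' h.1).2, mem_dset.mpr h.2⟩
    have hdisj : ∀ a ∈ Tp, ∀ b ∈ Tp, a ≠ b →
        Disjoint ((dset c a).erase p) ((dset c b).erase p) := by
      intro a ha b hb hne
      obtain ⟨haS, haC, haP⟩ := hmemTp a ha
      obtain ⟨hbS, hbC, hbP⟩ := hmemTp b hb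
      have hk := key_ineq c a b
      rw [hd_eq c a, hd_eq c b, haC, hbC] at hk
      have h3 := hS a haS b hbS hne
      have hint : ((dset c a) ∩ (dset c b)).card ≤ 1 := by omega
      rw [Finset.disjoint_left]
      intro q hq hq'
      rw [Finset.mem_erase] at hq hq'
      have hpair : ({p, q} : Finset (Fin m)) ⊆ (dset c a) ∩ (dset c b) := by
        intro z hz
        rw [Finset.mem_insert, Finset.mem_singleton] at hz
        rcases hz with rfl | rfl
        · exact Finset.mem_inter.mpr ⟨haP, hbP⟩
        · exact Finset.mem_inter.mpr ⟨hq.2, hq'.2⟩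
      have := Finset.card_le_card hpair
      rw [Finset.card_pair (fun h => hq.1 h.symm)] at this
      omega
    have hcard : (Tp.biUnion (fun c' => (dset c c').erase p)).card = 2 * Tp.card := by
      rw [Finset.card_biUnion hdisj, Finset.sum_congr rfl (fun c' hc' => ?_),
        Finset.sum_const, smul_eq_mul, Nat.mul_comm]
      obtain ⟨_, hC, hP⟩ := hmemTp c' hc'
      rw [Finset.card_erase_of_mem hP, hC]
    have hsub : (Tp.biUnion (fun c' => (dset c c').erase p)).card
        ≤ (Finset.univ.erase p).card := by
      apply Finset.card_le_card
      intro q hq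
      rw [Finset.mem_biUnion] at hq
      obtain ⟨c', _, hq⟩ := hq
      rw [Finset.mem_erase] at hq ⊢
      exact ⟨hq.1, Finset.mem_univ q⟩
    rw [hcard] at hsub
    rw [Finset.card_erase_of_mem (Finset.mem_univ p), Finset.card_univ, Fintype.card_fin] at hsub
    obtain ⟨r, rfl⟩ := hme
    omega
  -- double count
  have step1 : 3 * T.card = ∑ c' ∈ T, (Finset.univ.filter (fun p => c p ≠ c' p)).card := by
    rw [Finset.sum_congr rfl (fun c' hc' => by rw [← dset_eq_filter, (hmemT c' hc').2]),
      Finset.sum_const, smul_eq_mul, Nat.mul_comm]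
  have step2 : ∑ c' ∈ T, (Finset.univ.filter (fun p => c p ≠ c' p)).card
      = ∑ p : Fin m, (T.filter (fun c' => c p ≠ c' p)).card :=
    double_count T Finset.univ (fun c' p => c p ≠ c' p)
  calc 6 * T.card = 2 * (3 * T.card) := by ring
    _ = 2 * ∑ p : Fin m, (T.filter (fun c' => c p ≠ c' p)).card := by rw [step1, step2]
    _ = ∑ p : Fin m, 2 * (T.filter (fun c' => c p ≠ c' p)).card := by rw [Finset.mul_sum]
    _ ≤ ∑ _p : Fin m, (m - 2) := Finset.sum_le_sum (fun p _ => step3 p)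
    _ = m * (m - 2) := by rw [Finset.sum_const, smul_eq_mul, Finset.card_univ, Fintype.card_fin]
end refined2
section refined3
open Finset
variable {m : ℕ} {S : Finset (Fin m → Fin 2)}

lemma sphere_lb (c : Fin m → Fin 2) :
    m * (m - 1) ≤ 2 * (Finset.univ.filter (fun x => hammingDist x c = 2)).card := by
  have hinj : ∀ s ∈ Finset.univ.powersetCard 2, ∀ t ∈ Finset.univ.powersetCard 2,
      flipS c s = flipS c t → s = t := fun s _ t _ h => flipS_injOn c h
  have hmaps : ∀ s ∈ Finset.univ.powersetCard 2,
      flipS c s ∈ Finset.univ.filter (fun x => hammingDist x c = 2) := by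
    intro s hs
    rw [Finset.mem_powersetCard] at hs
    rw [Finset.mem_filter]
    exact ⟨Finset.mem_univ _, by rw [hd_flipS, hs.2]⟩
  have := Finset.card_le_card_of_injOn _ hmaps (fun s hs t ht h => hinj s hs t ht h)
  rw [Finset.card_powersetCard, Finset.card_univ, Fintype.card_fin] at this
  have h2 := choose2 m
  omega

lemma Wc_lb (hm : 2 ≤ m) (hme : Even m)
    (hS : ∀ c ∈ S, ∀ c' ∈ S, c ≠ c' → 3 ≤ hammingDist c c')
    {c : Fin m → Fin 2} (hc : c ∈ S) :
    m ≤ 2 * (Finset.univ.filter (fun x => hammingDist x c = 2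
        ∧ ∀ c' ∈ S, 2 ≤ hammingDist x c')).card := by
  set T := S.filter (fun c' => hammingDist c c' = 3) with hT
  set Wc := Finset.univ.filter (fun x => hammingDist x c = 2
        ∧ ∀ c' ∈ S, 2 ≤ hammingDist x c') with hWc
  set bad := T.biUnion (fun c' => (dset c c').image (fun i => flipS c' ({i} : Finset (Fin m))))
    with hbad
  have hbadcard : bad.card ≤ 3 * T.card := by
    refine le_trans (Finset.card_biUnion_le) ?_
    have h1 : ∀ c' ∈ T, ((dset c c').image (fun i => flipS c' ({i} : Finset (Fin m)))).card ≤ 3 := by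
      intro c' hc'
      rw [hT, Finset.mem_filter] at hc'
      refine le_trans (Finset.card_image_le) ?_
      rw [← hd_eq c c', hc'.2]
    calc ∑ c' ∈ T, ((dset c c').image (fun i => flipS c' ({i} : Finset (Fin m)))).card
        ≤ ∑ _c' ∈ T, 3 := Finset.sum_le_sum h1
      _ = 3 * T.card := by rw [Finset.sum_const, smul_eq_mul, Nat.mul_comm]
  have hincl : Finset.univ.filter (fun x => hammingDist x c = 2) ⊆ Wc ∪ bad := by
    intro x hx
    rw [Finset.mem_filter] at hx
    obtain ⟨_, hx2⟩ := hx
    by_cases hgood : ∀ c' ∈ S, 2 ≤ hammingDist x c'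
    · exact Finset.mem_union_left _ (Finset.mem_filter.mpr ⟨Finset.mem_univ _, hx2, hgood⟩)
    · push_neg at hgood
      obtain ⟨c', hc'S, hlt⟩ := hgood
      have hxc' : hammingDist x c' = 1 := by
        have h0 : hammingDist x c' ≠ 0 := by
          intro h0
          obtain rfl := eq_of_hammingDist_eq_zero h0
          have hne : c ≠ x := by
            intro h; rw [h, hammingDist_self] at hx2; omega
          have h3 := hS c hc x hc'S hne
          rw [hammingDist_comm] at hx2
          omega
        omega
      have hne : c ≠ c' := by
        intro h; rw [← h] at hxc'; omega
      have hccT : hammingDist c c' = 3 := by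
        have h1 := hammingDist_triangle c x c'
        rw [hammingDist_comm c x] at h1
        have h2 := hS c hc c' hc'S hne
        omega
      obtain ⟨i, hi⟩ := Finset.card_eq_one.mp (by rw [← hd_eq]; exact hxc' :
        (dset x c').card = 1)
      have hxflip : x = flipS c' {i} := by
        rw [← hi]; exact eq_flipS x c'
      have hiD : i ∈ dset c c' := by
        by_contra hiD
        rw [mem_dset, not_not] at hiD
        have hxi : x i ≠ c' i := by
          have : i ∈ dset x c' := by rw [hi]; exact Finset.mem_singleton_self i
          exact mem_dset.mp this
        have hset : dset x c = insert i (dset c' c) := by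
          ext j
          by_cases hj : j = i
          · subst hj
            simp only [mem_dset, Finset.mem_insert, true_or, iff_true]
            rw [hiD]; exact hxi
          · have hxj : x j = c' j := by
              by_contra hxj
              exact hj (Finset.mem_singleton.mp (hi ▸ mem_dset.mpr hxj))
            simp only [mem_dset, Finset.mem_insert, hj, false_or, hxj]
        have hiN : i ∉ dset c' c := by
          rw [mem_dset, not_not, hiD]
        have hcc3 : (dset c' c).card = 3 := by
          rw [dset_comm, ← hd_eq, hccT]
        have : (dset x c).card = 4 := by
          rw [hset, Finset.card_insert_of_notMem hiN, hcc3]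
        rw [hd_eq, this] at hx2
        omega
      apply Finset.mem_union_right
      rw [hbad, Finset.mem_biUnion]
      refine ⟨c', ?_, ?_⟩
      · rw [hT, Finset.mem_filter]; exact ⟨hc'S, hccT⟩
      · rw [Finset.mem_image]; exact ⟨i, hiD, hxflip.symm⟩
  have hsph := sphere_lb c
  have hcards : (Finset.univ.filter (fun x => hammingDist x c = 2)).card
      ≤ Wc.card + 3 * T.card := by
    calc (Finset.univ.filter (fun x => hammingDist x c = 2)).card ≤ (Wc ∪ bad).card :=
        Finset.card_le_card hincl
      _ ≤ Wc.card + bad.card := Finset.card_union_le _ _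
      _ ≤ Wc.card + 3 * T.card := by omega
  have htb := tset_bound hme hS hc
  rw [← hT] at htb
  have hsplit : m * (m - 1) = m * (m - 2) + m := by
    obtain ⟨r, hr⟩ := Nat.exists_eq_add_of_le hm
    subst hr
    have e1 : 2 + r - 1 = r + 1 := by omega
    have e2 : 2 + r - 2 = r := by omega
    rw [e1, e2]; ring
  omega
end refined3
section refined4
open Finset
variable {m : ℕ} {S : Finset (Fin m → Fin 2)}

lemma code_refined (hm : 2 ≤ m) (hme : Even m)
    (hS : ∀ c ∈ S, ∀ c' ∈ S, c ≠ c' → 3 ≤ hammingDist c c') :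
    S.card * (m + 2) ≤ 2 ^ m := by
  set W := Finset.univ.filter (fun x => (∃ c ∈ S, hammingDist x c = 2)
      ∧ ∀ c' ∈ S, 2 ≤ hammingDist x c') with hW
  have hWcS : ∀ c ∈ S, W.filter (fun x => hammingDist x c = 2)
      = Finset.univ.filter (fun x => hammingDist x c = 2 ∧ ∀ c' ∈ S, 2 ≤ hammingDist x c') := by
    intro c hc
    ext x
    simp only [hW, Finset.mem_filter, Finset.mem_univ, true_and]
    constructor
    · rintro ⟨⟨_, h2⟩, h3⟩; exact ⟨h3, h2⟩
    · rintro ⟨h1, h2⟩; exact ⟨⟨⟨c, hc, h1⟩, h2⟩, h1⟩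
  have hWc2 : ∀ c ∈ S, m ≤ 2 * (W.filter (fun x => hammingDist x c = 2)).card := by
    intro c hc
    rw [hWcS c hc]
    exact Wc_lb hm hme hS hc
  have hdc : ∑ c ∈ S, (W.filter (fun x => hammingDist x c = 2)).card
      = ∑ x ∈ W, (S.filter (fun c => hammingDist x c = 2)).card :=
    double_count S W (fun c x => hammingDist x c = 2)
  have hchain : S.card * m ≤ W.card * m := by
    calc S.card * m = ∑ _c ∈ S, m := by rw [Finset.sum_const, smul_eq_mul]
      _ ≤ ∑ c ∈ S, 2 * (W.filter (fun x => hammingDist x c = 2)).card :=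
          Finset.sum_le_sum hWc2
      _ = 2 * ∑ c ∈ S, (W.filter (fun x => hammingDist x c = 2)).card := by
          rw [Finset.mul_sum]
      _ = 2 * ∑ x ∈ W, (S.filter (fun c => hammingDist x c = 2)).card := by rw [hdc]
      _ = ∑ x ∈ W, 2 * (S.filter (fun c => hammingDist x c = 2)).card := by
          rw [Finset.mul_sum]
      _ ≤ ∑ _x ∈ W, m := Finset.sum_le_sum (fun x _ => mult_bound hS x)
      _ = W.card * m := by rw [Finset.sum_const, smul_eq_mul]
  have hSW : S.card ≤ W.card := Nat.le_of_mul_le_mul_right hchain (by omega)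
  have hdisjBW : Disjoint (S.biUnion bset) W := by
    rw [Finset.disjoint_left]
    intro x hx hxW
    rw [Finset.mem_biUnion] at hx
    obtain ⟨c, hcS, hxc⟩ := hx
    have h1 := mem_bset_dist hxc
    rw [hW, Finset.mem_filter] at hxW
    have h2 := hxW.2.2 c hcS
    omega
  have hcards : (S.biUnion bset).card + W.card ≤ 2 ^ m := by
    rw [← Finset.card_union_of_disjoint hdisjBW]
    calc ((S.biUnion bset) ∪ W).card ≤ (Finset.univ : Finset (Fin m → Fin 2)).card :=
        Finset.card_le_card (Finset.subset_univ _)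
      _ = 2 ^ m := by simp [Finset.card_univ]
  rw [ball_union_card hS] at hcards
  have : S.card * (m + 2) = S.card * (m + 1) + S.card := by ring
  omega
end refined4
section punct
open Finset

def punc {m : ℕ} (x : Fin (m + 1) → Fin 2) : Fin m → Fin 2 := fun i => x i.castSucc

lemma dset_punc_sub {m : ℕ} (x y : Fin (m + 1) → Fin 2) :
    dset x y ⊆ insert (Fin.last m) ((dset (punc x) (punc y)).map Fin.castSuccEmb) := by
  intro i hi
  rw [mem_dset] at hi
  rw [Finset.mem_insert]
  rcases Fin.eq_castSucc_or_eq_last i with ⟨j, rfl⟩ | rfl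
  · right
    rw [Finset.mem_map]
    exact ⟨j, mem_dset.mpr hi, rfl⟩
  · exact Or.inl rfl

lemma hd_punc {m : ℕ} (x y : Fin (m + 1) → Fin 2) :
    hammingDist x y ≤ hammingDist (punc x) (punc y) + 1 := by
  rw [hd_eq x y, hd_eq (punc x) (punc y)]
  calc (dset x y).card
      ≤ (insert (Fin.last m) ((dset (punc x) (punc y)).map Fin.castSuccEmb)).card :=
        Finset.card_le_card (dset_punc_sub x y)
    _ ≤ ((dset (punc x) (punc y)).map Fin.castSuccEmb).card + 1 := Finset.card_insert_le _ _
    _ = (dset (punc x) (punc y)).card + 1 := by rw [Finset.card_map]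

lemma punc_eq {m : ℕ} {x y : Fin (m + 1) → Fin 2} (h : punc x = punc y) :
    hammingDist x y ≤ 1 := by
  have := hd_punc x y
  rw [h, hammingDist_self] at this
  omega

end punct

section final
open Finset

lemma color_bound {m k : ℕ} (hm : 2 ≤ m)
    (hcol : (powerGraph (hypercube (m + 1)) 3).Colorable k) :
    2 * (m + 1) ≤ k ∧ (Even m → 2 * (m + 2) ≤ k) := by
  obtain ⟨C⟩ := hcol
  set F : Fin k → Finset (Fin (m + 1) → Fin 2) :=
    fun j => Finset.univ.filter (fun x => C x = j) with hF
  have hsum : ∑ j : Fin k, (F j).card = 2 ^ (m + 1) := by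
    rw [hF, ← Finset.card_eq_sum_card_fiberwise (fun x _ => Finset.mem_univ (C x))]
    simp [Finset.card_univ]
  have hfib : ∀ j : Fin k, ∀ x ∈ F j, ∀ y ∈ F j, x ≠ y → 4 ≤ hammingDist x y := by
    intro j x hx y hy hne
    rw [hF, Finset.mem_filter] at hx hy
    have hnadj : ¬ (powerGraph (hypercube (m + 1)) 3).Adj x y := by
      intro hadj
      exact C.valid hadj (hx.2.trans hy.2.symm)
    have hreach : (hypercube (m + 1)).Reachable x y := hcube_reach x y
    have hdist : ¬ ((hypercube (m + 1)).dist x y ≤ 3) := by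
      intro hd
      exact hnadj ⟨hne, hreach, hd⟩
    have := hcube_dist_le x y
    omega
  have hinj : ∀ j : Fin k, ∀ x ∈ F j, ∀ y ∈ F j, punc x = punc y → x = y := by
    intro j x hx y hy hxy
    by_contra hne
    have h4 := hfib j x hx y hy hne
    have h1 := punc_eq hxy
    omega
  have hcardS : ∀ j : Fin k, ((F j).image punc).card = (F j).card := by
    intro j
    exact Finset.card_image_of_injOn (fun x hx y hy h => hinj j x hx y hy h)
  have hSpair : ∀ j : Fin k, ∀ a ∈ (F j).image punc, ∀ b ∈ (F j).image punc,
      a ≠ b → 3 ≤ hammingDist a b := by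
    intro j a ha b hb hne
    obtain ⟨x, hx, rfl⟩ := Finset.mem_image.mp ha
    obtain ⟨y, hy, rfl⟩ := Finset.mem_image.mp hb
    have hxyne : x ≠ y := fun h => hne (h ▸ rfl)
    have h4 := hfib j x hx y hy hxyne
    have h1 := hd_punc x y
    omega
  constructor
  · have hcodes : ∀ j : Fin k, (F j).card * (m + 1) ≤ 2 ^ m := by
      intro j
      rw [← hcardS j]
      exact code_ball (hSpair j)
    have : 2 ^ (m + 1) * (m + 1) ≤ k * 2 ^ m := by
      calc 2 ^ (m + 1) * (m + 1) = ∑ j : Fin k, (F j).card * (m + 1) := by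
            rw [← Finset.sum_mul, hsum]
        _ ≤ ∑ _j : Fin k, 2 ^ m := Finset.sum_le_sum (fun j _ => hcodes j)
        _ = k * 2 ^ m := by rw [Finset.sum_const, smul_eq_mul, Finset.card_univ,
            Fintype.card_fin]
    have h2 : 2 ^ (m + 1) * (m + 1) = (2 * (m + 1)) * 2 ^ m := by ring
    rw [h2] at this
    exact Nat.le_of_mul_le_mul_right this (Nat.pow_pos (by omega : 0 < 2))
  · intro hme
    have hcodes : ∀ j : Fin k, (F j).card * (m + 2) ≤ 2 ^ m := by
      intro j
      rw [← hcardS j]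
      exact code_refined hm hme (hSpair j)
    have : 2 ^ (m + 1) * (m + 2) ≤ k * 2 ^ m := by
      calc 2 ^ (m + 1) * (m + 2) = ∑ j : Fin k, (F j).card * (m + 2) := by
            rw [← Finset.sum_mul, hsum]
        _ ≤ ∑ _j : Fin k, 2 ^ m := Finset.sum_le_sum (fun j _ => hcodes j)
        _ = k * 2 ^ m := by rw [Finset.sum_const, smul_eq_mul, Finset.card_univ,
            Fintype.card_fin]
    have h2 : 2 ^ (m + 1) * (m + 2) = (2 * (m + 2)) * 2 ^ m := by ring
    rw [h2] at this
    exact Nat.le_of_mul_le_mul_right this (Nat.pow_pos (by omega : 0 < 2))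

lemma le_chrom {V : Type*} (G : SimpleGraph V) (b : ℕ) (h : ∀ k, G.Colorable k → b ≤ k) :
    (b : ℕ∞) ≤ G.chromaticNumber := by
  rw [SimpleGraph.chromaticNumber]
  exact le_iInf₂ (fun k hk => by exact_mod_cast h k hk)

/-- for `n ≥ 3`, `χ₃(Q_n) ≥ 2n` if `n` is even and
`χ₃(Q_n) ≥ 2(n + 1)` if `n` is odd. -/
theorem stmt5 (n : ℕ) (hn : 3 ≤ n) :
    (Even n → (2 * (n : ℕ∞)) ≤ distChromaticNumber (hypercube n) 3) ∧
    (Odd n → (2 * ((n : ℕ∞) + 1)) ≤ distChromaticNumber (hypercube n) 3) := by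
  obtain ⟨m, rfl⟩ : ∃ m, n = m + 1 := ⟨n - 1, by omega⟩
  have hm : 2 ≤ m := by omega
  constructor
  · intro _
    have hb : ∀ k, (powerGraph (hypercube (m + 1)) 3).Colorable k → 2 * (m + 1) ≤ k :=
      fun k hk => (color_bound hm hk).1
    have := le_chrom _ (2 * (m + 1)) hb
    rw [distChromaticNumber]
    calc (2 * ((m : ℕ∞) + 1)) = ((2 * (m + 1) : ℕ) : ℕ∞) := by push_cast; ring
      _ ≤ _ := this
  · intro hodd
    have hme : Even m := by
      obtain ⟨r, hr⟩ := hodd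
      exact ⟨r, by omega⟩
    have hb : ∀ k, (powerGraph (hypercube (m + 1)) 3).Colorable k → 2 * (m + 2) ≤ k :=
      fun k hk => (color_bound hm hk).2 hme
    have := le_chrom _ (2 * (m + 2)) hb
    rw [distChromaticNumber]
    calc (2 * (((m : ℕ∞) + 1) + 1)) = ((2 * (m + 2) : ℕ) : ℕ∞) := by push_cast; ring
      _ ≤ _ := this

end final
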